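/- Let R ∈ End(V⊗V) be an invertible solution of the Yang–Baxter equation. Suppose F ∈ End(V⊗V) is invertible and G ∈ End(V⊗V⊗V) is invertible such that Φ := G ∘ F₁₂⁻¹ and Ψ := G ∘ F₂₃⁻¹ satisfy R₁₂ Φ = Φ^{(213)} R₁₂ and R₂₃ Ψ = Ψ^{(132)} R₂₃. Then R̃ := τ(F)⁻¹ R F satisfies the Yang–Baxter equation. -/

import Mathlib

/-!
Write `Ř₁₂ = P₁₂ R₁₂` and `Ř₂₃ = P₂₃ R₂₃`. The Yang–Baxter equation for `R` is the braid relation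
`Ř₁₂ Ř₂₃ Ř₁₂ = Ř₂₃ Ř₁₂ Ř₂₃`. For `R̃ = τ(F)⁻¹ R F` one has `Ř̃₁₂ = F₁₂⁻¹ Ř₁₂ F₁₂`, and the twisting
condition says exactly that `Φ = G F₁₂⁻¹` commutes with `Ř₁₂`; hence `Ř̃₁₂ = G⁻¹ Ř₁₂ G`, and likewise
`Ř̃₂₃ = G⁻¹ Ř₂₃ G`. Conjugation by the single element `G` preserves the braid relation.
-/
open TensorProduct

noncomputable section
variable (k V : Type*) [Field k] [AddCommGroup V] [Module k V]

/-- The flip `P : V ⊗ V → V ⊗ V`. -/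
def flipE : Module.End k (V ⊗[k] V) := (TensorProduct.comm k V V).toLinearMap

/-- `τ(X) = P X P`. -/
def tauE (X : Module.End k (V ⊗[k] V)) : Module.End k (V ⊗[k] V) :=
  flipE k V * X * flipE k V

/-- The embedding `X ↦ X₂₃` into `End(V ⊗ V ⊗ V)`. -/
def leg23 (X : Module.End k (V ⊗[k] V)) : Module.End k (V ⊗[k] (V ⊗[k] V)) :=
  LinearMap.lTensor V X

/-- The embedding `X ↦ X₁₂` into `End(V ⊗ V ⊗ V)`. -/
def leg12 (X : Module.End k (V ⊗[k] V)) : Module.End k (V ⊗[k] (V ⊗[k] V)) :=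
  (TensorProduct.assoc k V V V).toLinearMap ∘ₗ LinearMap.rTensor V X ∘ₗ
    (TensorProduct.assoc k V V V).symm.toLinearMap

/-- The flip of factors 1 and 2. -/
def P12 : Module.End k (V ⊗[k] (V ⊗[k] V)) := leg12 k V (flipE k V)

/-- The flip of factors 2 and 3. -/
def P23 : Module.End k (V ⊗[k] (V ⊗[k] V)) := leg23 k V (flipE k V)

/-- The embedding `X ↦ X₁₃`. -/
def leg13 (X : Module.End k (V ⊗[k] V)) : Module.End k (V ⊗[k] (V ⊗[k] V)) :=
  P23 k V * leg12 k V X * P23 k V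

/-- The Yang–Baxter equation `R₁₂R₁₃R₂₃ = R₂₃R₁₃R₁₂`. -/
def YB (R : Module.End k (V ⊗[k] V)) : Prop :=
  leg12 k V R * leg13 k V R * leg23 k V R = leg23 k V R * leg13 k V R * leg12 k V R

/-- `(F, G)` (with given two-sided inverses `F'`, `G'`) is a *twisting pair* for `R`:
`Φ := G F₁₂⁻¹` and `Ψ := G F₂₃⁻¹` satisfy `R₁₂ Φ = Φ^{(213)} R₁₂` and
`R₂₃ Ψ = Ψ^{(132)} R₂₃`. -/
def TwistingPair (R F F' : Module.End k (V ⊗[k] V))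
    (G G' : Module.End k (V ⊗[k] (V ⊗[k] V))) : Prop :=
  F * F' = 1 ∧ F' * F = 1 ∧ G * G' = 1 ∧ G' * G = 1 ∧
  leg12 k V R * (G * leg12 k V F') =
    (P12 k V * (G * leg12 k V F') * P12 k V) * leg12 k V R ∧
  leg23 k V R * (G * leg23 k V F') =
    (P23 k V * (G * leg23 k V F') * P23 k V) * leg23 k V R

section Monoid

variable {M : Type*} [Monoid M]

theorem commute_mul_of_mul_eq_conj_mul {P a Φ : M} (hP : P * P = 1)
    (h : a * Φ = P * Φ * P * a) : Commute Φ (P * a) := by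
  calc Φ * (P * a) = P * (P * Φ * P * a) := by simp only [← mul_assoc, hP, one_mul]
    _ = P * a * Φ := by rw [← h, mul_assoc]

theorem mul_mul_eq_of_commute {G G' X X' b : M} (hG : G' * G = 1) (hX : X' * X = 1)
    (h : Commute (G * X') b) : X' * b * X = G' * b * G := by
  calc X' * b * X = G' * (G * X' * b) * X := by simp only [← mul_assoc, hG, one_mul]
    _ = G' * b * G := by rw [h.eq]; simp only [mul_assoc, hX, mul_one]

theorem braid_relation_conj {G G' a b : M} (hG : G * G' = 1) (h : a * b * a = b * a * b) :
    G' * a * G * (G' * b * G) * (G' * a * G) = G' * b * G * (G' * a * G) * (G' * b * G) := by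
  have conj_mul_conj_mul_conj :
      ∀ x y z : M, G' * x * G * (G' * y * G) * (G' * z * G) = G' * (x * y * z) * G :=
    fun x y z => by simp only [mul_assoc, ← mul_assoc G G', hG, one_mul]
  rw [conj_mul_conj_mul_conj, conj_mul_conj_mul_conj, h]

end Monoid

theorem flipE_mul_self : flipE k V * flipE k V = 1 :=
  TensorProduct.ext' fun _ _ => by simp [flipE]

theorem leg12_mul (X Y : Module.End k (V ⊗[k] V)) :
    leg12 k V (X * Y) = leg12 k V X * leg12 k V Y := by
  ext
  simp [leg12]

theorem leg12_one : leg12 k V 1 = 1 := by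
  ext
  simp [leg12]

theorem leg23_mul (X Y : Module.End k (V ⊗[k] V)) :
    leg23 k V (X * Y) = leg23 k V X * leg23 k V Y :=
  LinearMap.lTensor_mul V X Y

theorem leg23_one : leg23 k V 1 = 1 :=
  LinearMap.lTensor_id V (V ⊗[k] V)

theorem P12_mul_self : P12 k V * P12 k V = 1 := by
  rw [P12, ← leg12_mul, flipE_mul_self, leg12_one]

theorem P23_mul_self : P23 k V * P23 k V = 1 := by
  rw [P23, ← leg23_mul, flipE_mul_self, leg23_one]

theorem P12_mul_leg23_mul_P12 (X : Module.End k (V ⊗[k] V)) :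
    P12 k V * leg23 k V X * P12 k V = leg13 k V X := by
  refine TensorProduct.ext_threefold' fun x y z => ?_
  simp only [leg13, P12, P23, leg12, leg23, flipE, Module.End.mul_apply, LinearMap.coe_comp,
    LinearEquiv.coe_coe, Function.comp_apply, assoc_symm_tmul, LinearMap.rTensor_tmul, comm_tmul,
    assoc_tmul, LinearMap.lTensor_tmul]
  -- both sides are linear in `w = X (x ⊗ z)`
  generalize X (x ⊗ₜ z) = w
  induction w using TensorProduct.induction_on with
  | zero => simp
  | tmul a c => simp
  | add u v hu hv => simp only [TensorProduct.tmul_add, TensorProduct.add_tmul, map_add, hu, hv]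

theorem P12_mul_P23_mul_P12 : P12 k V * P23 k V * P12 k V = P23 k V * P12 k V * P23 k V :=
  P12_mul_leg23_mul_P12 k V (flipE k V)

theorem leg12_mul_P23 (S : Module.End k (V ⊗[k] V)) :
    leg12 k V S * P23 k V = P23 k V * leg13 k V S := by
  rw [leg13, ← mul_assoc, ← mul_assoc, P23_mul_self, one_mul]

theorem leg13_mul_P23 (S : Module.End k (V ⊗[k] V)) :
    leg13 k V S * P23 k V = P23 k V * leg12 k V S := by
  rw [leg13, mul_assoc, P23_mul_self, mul_one]

theorem leg23_mul_P12 (S : Module.End k (V ⊗[k] V)) :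
    leg23 k V S * P12 k V = P12 k V * leg13 k V S := by
  rw [← P12_mul_leg23_mul_P12, ← mul_assoc, ← mul_assoc, P12_mul_self, one_mul]

theorem leg13_mul_P12 (S : Module.End k (V ⊗[k] V)) :
    leg13 k V S * P12 k V = P12 k V * leg23 k V S := by
  rw [← P12_mul_leg23_mul_P12, mul_assoc, P12_mul_self, mul_one]

def braid12 (S : Module.End k (V ⊗[k] V)) : Module.End k (V ⊗[k] (V ⊗[k] V)) :=
  P12 k V * leg12 k V S

def braid23 (S : Module.End k (V ⊗[k] V)) : Module.End k (V ⊗[k] (V ⊗[k] V)) :=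
  P23 k V * leg23 k V S

theorem braid12_mul_braid23_mul_braid12 (S : Module.End k (V ⊗[k] V)) :
    braid12 k V S * braid23 k V S * braid12 k V S =
      P12 k V * P23 k V * P12 k V * (leg23 k V S * leg13 k V S * leg12 k V S) := by
  calc braid12 k V S * braid23 k V S * braid12 k V S
      = P12 k V * (leg12 k V S * P23 k V) * leg23 k V S * P12 k V * leg12 k V S := by
        simp only [braid12, braid23, mul_assoc]
    _ = P12 k V * P23 k V * leg13 k V S * (leg23 k V S * P12 k V) * leg12 k V S := by
        rw [leg12_mul_P23]; simp only [mul_assoc]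
    _ = P12 k V * P23 k V * (leg13 k V S * P12 k V) * leg13 k V S * leg12 k V S := by
        rw [leg23_mul_P12]; simp only [mul_assoc]
    _ = _ := by rw [leg13_mul_P12]; simp only [mul_assoc]

theorem braid23_mul_braid12_mul_braid23 (S : Module.End k (V ⊗[k] V)) :
    braid23 k V S * braid12 k V S * braid23 k V S =
      P23 k V * P12 k V * P23 k V * (leg12 k V S * leg13 k V S * leg23 k V S) := by
  calc braid23 k V S * braid12 k V S * braid23 k V S
      = P23 k V * (leg23 k V S * P12 k V) * leg12 k V S * P23 k V * leg23 k V S := by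
        simp only [braid12, braid23, mul_assoc]
    _ = P23 k V * P12 k V * leg13 k V S * (leg12 k V S * P23 k V) * leg23 k V S := by
        rw [leg23_mul_P12]; simp only [mul_assoc]
    _ = P23 k V * P12 k V * (leg13 k V S * P23 k V) * leg13 k V S * leg23 k V S := by
        rw [leg12_mul_P23]; simp only [mul_assoc]
    _ = _ := by rw [leg13_mul_P23]; simp only [mul_assoc]

theorem yb_iff_braid (S : Module.End k (V ⊗[k] V)) :
    YB k V S ↔ braid12 k V S * braid23 k V S * braid12 k V S =
      braid23 k V S * braid12 k V S * braid23 k V S := by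
  have hP12 : IsUnit (P12 k V) := ⟨⟨_, _, P12_mul_self k V, P12_mul_self k V⟩, rfl⟩
  have hP23 : IsUnit (P23 k V) := ⟨⟨_, _, P23_mul_self k V, P23_mul_self k V⟩, rfl⟩
  rw [braid12_mul_braid23_mul_braid12, braid23_mul_braid12_mul_braid23, ← P12_mul_P23_mul_P12,
    ((hP12.mul hP23).mul hP12).mul_right_inj, YB, eq_comm]

theorem braid12_tauE_mul_mul (S F F' : Module.End k (V ⊗[k] V)) :
    braid12 k V (tauE k V F' * S * F) = leg12 k V F' * braid12 k V S * leg12 k V F := by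
  simp only [braid12, tauE, leg12_mul]
  change P12 k V * (P12 k V * _ * P12 k V * _ * _) = _
  simp only [← mul_assoc, P12_mul_self, one_mul]

theorem braid23_tauE_mul_mul (S F F' : Module.End k (V ⊗[k] V)) :
    braid23 k V (tauE k V F' * S * F) = leg23 k V F' * braid23 k V S * leg23 k V F := by
  simp only [braid23, tauE, leg23_mul]
  change P23 k V * (P23 k V * _ * P23 k V * _ * _) = _
  simp only [← mul_assoc, P23_mul_self, one_mul]

theorem twistingPair_yang_baxter
    (R F F' : Module.End k (V ⊗[k] V))
    (G G' : Module.End k (V ⊗[k] (V ⊗[k] V)))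
    (hYB : YB k V R)
    (hTP : TwistingPair k V R F F' G G') :
    YB k V (tauE k V F' * R * F) := by
  obtain ⟨-, hF'F, hGG', hG'G, h12, h23⟩ := hTP
  have e12 : braid12 k V (tauE k V F' * R * F) = G' * braid12 k V R * G := by
    rw [braid12_tauE_mul_mul]
    exact mul_mul_eq_of_commute hG'G (by rw [← leg12_mul, hF'F, leg12_one])
      (commute_mul_of_mul_eq_conj_mul (P12_mul_self k V) h12)
  have e23 : braid23 k V (tauE k V F' * R * F) = G' * braid23 k V R * G := by
    rw [braid23_tauE_mul_mul]
    exact mul_mul_eq_of_commute hG'G (by rw [← leg23_mul, hF'F, leg23_one])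
      (commute_mul_of_mul_eq_conj_mul (P23_mul_self k V) h23)
  rw [yb_iff_braid, e12, e23]
  exact braid_relation_conj hGG' ((yb_iff_braid k V R).mp hYB)
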